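/- arXiv:1502.01139 — 3 statements merged into one kernel-verified Lean document; each statement's English description precedes it below -/
import Mathlib

section
/- Let M = A + W − σ·v·vᵀ be a generalized modularity matrix, let x ∈ ℝⁿ be a nonzero vector with M x = m_G x and vᵀx ≥ 0, and let y ∈ ℝⁿ be an entrywise positive eigenvector of A+W associated with its largest eigenvalue λ₁(A+W). Then for every real ε ≥ 0, the set S = { i : xᵢ + ε·yᵢ ≥ 0 } is nonempty and induces a connected subgraph. -/
open Matrix BigOperators

/-- A nonnegative square matrix is irreducible if for every pair of indices `(i, j)`
there is a positive power `k` with `(A ^ k) i j > 0`. -/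
def Matrix.Irreducible {n : ℕ} (A : Matrix (Fin n) (Fin n) ℝ) : Prop :=
  ∀ i j, ∃ k : ℕ, 0 < k ∧ 0 < (A ^ k) i j

/-- The largest eigenvalue `λ₁(X)` of a real symmetric (Hermitian) matrix. -/
noncomputable def lam1 {n : ℕ} (X : Matrix (Fin n) (Fin n) ℝ) (hX : X.IsHermitian) : ℝ :=
  ⨆ i, hX.eigenvalues i

/-- The subgraph induced on `S` by the weighted adjacency matrix `A`: distinct vertices
`i, j ∈ S` are adjacent whenever the corresponding weight is positive. -/
def inducedSubgraph {n : ℕ} (A : Matrix (Fin n) (Fin n) ℝ) (S : Set (Fin n)) :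
    SimpleGraph S :=
  SimpleGraph.fromRel (fun i j => 0 < A i.val j.val)

/-!
Put `m = λ₁(M)` and `z = x + ε y`. Since `(A + W) x = m x + σ (vᵀx) v` with `vᵀx ≥ 0`, the Rayleigh
quotient gives `m ≤ λ₁(A + W)`, and then `(A + W) z ≥ m z` entrywise.

Suppose `S = {z ≥ 0}` splits into nonempty parts `P`, `Q` with no edge between them. Choose
`α, β ≥ 0`, not both zero, such that `w = α z|_P - β z|_Q` is orthogonal to `v`. On `S`,
`(A + W) w` is `α` (resp. `-β`) times `(A + W) z` minus the contribution of the negative entries of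
`z`, so `wᵀ(A + W)w ≥ m wᵀw`; as `Mw = (A + W)w`, the vector `w` attains `λ₁(M)` and is an
eigenvector. Comparing entries, every vertex of a part with nonzero coefficient has no edge to
`{z < 0}`, so that part is closed under `A`, which contradicts irreducibility.
-/

section Rayleigh

variable {n : ℕ} {X : Matrix (Fin n) (Fin n) ℝ} (hX : X.IsHermitian)

open scoped MatrixOrder in
lemma posSemidef_lam1_smul_one_sub : (lam1 X hX • 1 - X).PosSemidef := by
  have hle : X ≤ algebraMap ℝ _ (lam1 X hX) := le_algebraMap_of_spectrum_le (by
    rw [hX.spectrum_real_eq_range_eigenvalues]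
    rintro _ ⟨i, rfl⟩
    exact le_ciSup (Set.finite_range _).bddAbove i)
  simpa [Matrix.le_iff, Algebra.algebraMap_eq_smul_one] using hle

lemma dotProduct_lam1_smul_one_sub_mulVec (w : Fin n → ℝ) :
    w ⬝ᵥ (lam1 X hX • 1 - X) *ᵥ w = lam1 X hX * (w ⬝ᵥ w) - w ⬝ᵥ X *ᵥ w := by
  rw [sub_mulVec, smul_mulVec, one_mulVec, dotProduct_sub, dotProduct_smul, smul_eq_mul]

lemma dotProduct_mulVec_le_lam1 (w : Fin n → ℝ) : w ⬝ᵥ X *ᵥ w ≤ lam1 X hX * (w ⬝ᵥ w) := by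
  have h := (posSemidef_lam1_smul_one_sub hX).dotProduct_mulVec_nonneg w
  rw [star_trivial, dotProduct_lam1_smul_one_sub_mulVec] at h
  linarith

lemma mulVec_eq_lam1_smul_of_le {w : Fin n → ℝ} (h : lam1 X hX * (w ⬝ᵥ w) ≤ w ⬝ᵥ X *ᵥ w) :
    X *ᵥ w = lam1 X hX • w := by
  have h0 : star w ⬝ᵥ (lam1 X hX • 1 - X) *ᵥ w = 0 := by
    rw [star_trivial, dotProduct_lam1_smul_one_sub_mulVec]
    linarith [dotProduct_mulVec_le_lam1 hX w]
  have h1 := ((posSemidef_lam1_smul_one_sub hX).dotProduct_mulVec_zero_iff w).mp h0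
  rwa [sub_mulVec, smul_mulVec, one_mulVec, sub_eq_zero, eq_comm] at h1

lemma le_lam1_of_le_dotProduct_mulVec {μ : ℝ} {w : Fin n → ℝ} (hw : w ≠ 0)
    (h : μ * (w ⬝ᵥ w) ≤ w ⬝ᵥ X *ᵥ w) : μ ≤ lam1 X hX := by
  have hpos : 0 < w ⬝ᵥ w :=
    (Finset.sum_nonneg fun i _ => mul_self_nonneg (w i)).lt_of_ne
      (Ne.symm (mt dotProduct_self_eq_zero.mp hw))
  exact le_of_mul_le_mul_right (h.trans (dotProduct_mulVec_le_lam1 hX w)) hpos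

end Rayleigh

section

variable {n : ℕ} {A : Matrix (Fin n) (Fin n) ℝ}

lemma Matrix.Irreducible.eq_univ_of_forall_apply_eq_zero (hA : A.Irreducible)
    {T : Set (Fin n)} (hT : T.Nonempty) (hcl : ∀ i ∈ T, ∀ j ∉ T, A i j = 0) : T = Set.univ := by
  by_contra hne
  obtain ⟨j, hj⟩ := (Set.ne_univ_iff_exists_notMem T).mp hne
  obtain ⟨i, hi⟩ := hT
  have hpow : ∀ k : ℕ, ∀ i ∈ T, ∀ j ∉ T, (A ^ k) i j = 0 := by
    intro k
    induction k with
    | zero =>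
      intro i hi j hj
      exact one_apply_ne (fun h => hj (h ▸ hi))
    | succ k ih =>
      intro i hi j hj
      rw [pow_succ, mul_apply]
      refine Finset.sum_eq_zero fun l _ => ?_
      by_cases hl : l ∈ T
      · rw [hcl l hl j hj, mul_zero]
      · rw [ih i hi l hl, zero_mul]
  obtain ⟨k, -, hk⟩ := hA i j
  exact hk.ne' (hpow k i hi j hj)

lemma inducedSubgraph_preconnected_of_forall_closed {S : Set (Fin n)}
    (h : ∀ P ⊆ S, P.Nonempty → (∀ i ∈ P, ∀ j ∈ S, 0 < A i j → j ∈ P) → S ⊆ P) :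
    (inducedSubgraph A S).Preconnected := by
  intro u u'
  let P : Set (Fin n) := {j | ∃ hj : j ∈ S, (inducedSubgraph A S).Reachable u ⟨j, hj⟩}
  have hclosed : ∀ i ∈ P, ∀ j ∈ S, 0 < A i j → j ∈ P := by
    rintro i ⟨hi, hui⟩ j hj hij
    refine ⟨hj, ?_⟩
    by_cases heq : i = j
    · subst heq
      exact hui
    · exact hui.trans (SimpleGraph.Adj.reachable
        ((SimpleGraph.fromRel_adj _ _ _).mpr ⟨fun h => heq (congrArg Subtype.val h), Or.inl hij⟩))
  obtain ⟨_, hu'⟩ := h P (fun j hj => hj.1) ⟨u, u.2, .rfl⟩ hclosed u'.2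
  exact hu'

end

lemma exists_nonneg_add_pos_mul_eq_mul {a b : ℝ} (ha : 0 ≤ a) (hb : 0 ≤ b) :
    ∃ α β : ℝ, 0 ≤ α ∧ 0 ≤ β ∧ 0 < α + β ∧ α * a = β * b := by
  rcases ha.eq_or_lt with rfl | ha
  · exact ⟨1, 0, zero_le_one, le_rfl, by norm_num, by ring⟩
  · exact ⟨b, a, hb, ha.le, by linarith, mul_comm b a⟩

lemma exists_nonneg_of_dotProduct_nonneg {n : ℕ} {v x : Fin n → ℝ} (hvpos : ∀ i, 0 ≤ v i)
    (hv : v ≠ 0) (hvx : 0 ≤ v ⬝ᵥ x) : ∃ i, 0 ≤ x i := by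
  by_contra! hneg
  obtain ⟨k, hk⟩ := Function.ne_iff.mp hv
  have hlt : v ⬝ᵥ x < 0 :=
    Finset.sum_neg' (fun i _ => mul_nonpos_of_nonneg_of_nonpos (hvpos i) (hneg i).le)
      ⟨k, Finset.mem_univ k, mul_neg_of_pos_of_neg ((hvpos k).lt_of_ne' hk) (hneg k)⟩
  linarith

section

variable {n : ℕ} {A W M : Matrix (Fin n) (Fin n) ℝ} {v z τ : Fin n → ℝ} {σ : ℝ}

lemma mulVec_inf_zero_nonpos (hApos : ∀ i j, 0 ≤ A i j) (i : Fin n) :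
    (A *ᵥ (z ⊓ 0)) i ≤ 0 := by
  rw [mulVec, dotProduct]
  exact Finset.sum_nonpos fun j _ => mul_nonpos_of_nonneg_of_nonpos (hApos i j) inf_le_right

lemma apply_eq_zero_of_mulVec_inf_zero_eq_zero (hApos : ∀ i j, 0 ≤ A i j) {i j : Fin n}
    (hi : (A *ᵥ (z ⊓ 0)) i = 0) (hj : z j < 0) : A i j = 0 := by
  rw [mulVec, dotProduct] at hi
  have hterm := (Finset.sum_eq_zero_iff_of_nonpos fun k _ =>
    mul_nonpos_of_nonneg_of_nonpos (hApos i k) inf_le_right).mp hi j (Finset.mem_univ j)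
  rw [min_eq_left hj.le] at hterm
  exact (mul_eq_zero.mp hterm).resolve_right hj.ne

lemma add_mulVec_mul_apply (hW : W.IsDiag) (hτneg : ∀ j, z j < 0 → τ j = 0) {i : Fin n}
    (hτ : ∀ j, 0 ≤ z j → A i j ≠ 0 → τ j = τ i) :
    ((A + W) *ᵥ (τ * z)) i = τ i * (((A + W) *ᵥ z) i - (A *ᵥ (z ⊓ 0)) i) := by
  simp only [mulVec, dotProduct, ← Finset.sum_sub_distrib, Finset.mul_sum]
  refine Finset.sum_congr rfl fun j _ => ?_
  simp only [Pi.mul_apply, Pi.inf_apply, Pi.zero_apply, Matrix.add_apply]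
  rcases lt_or_ge (z j) 0 with hj | hj
  · rw [hτneg j hj, inf_eq_left.mpr hj.le]
    by_cases hij : i = j
    · rw [← hij] at hj ⊢
      rw [hτneg i hj]
      ring
    · rw [hW hij]
      ring
  · rw [inf_eq_right.mpr hj]
    by_cases hij : i = j
    · rw [hij]
      ring
    · rw [hW hij]
      by_cases hA : A i j = 0
      · rw [hA]
        ring
      · rw [hτ j hj hA]
        ring

theorem apply_eq_zero_of_lam1_le_mulVec (hApos : ∀ i j, 0 ≤ A i j) (hW : W.IsDiag)
    (hMdef : M = A + W - σ • vecMulVec v v) (hM : M.IsHermitian)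
    (hz : ∀ i, lam1 M hM * z i ≤ ((A + W) *ᵥ z) i)
    (hτneg : ∀ j, z j < 0 → τ j = 0) (hτ : ∀ i j, 0 ≤ z i → 0 ≤ z j → A i j ≠ 0 → τ j = τ i)
    (hvτ : v ⬝ᵥ (τ * z) = 0) {i j : Fin n} (hi : τ i ≠ 0) (hj : z j < 0) : A i j = 0 := by
  set m := lam1 M hM
  set w := τ * z
  have hc := mulVec_inf_zero_nonpos (z := z) hApos
  have hBw : ∀ k, 0 ≤ z k →
      ((A + W) *ᵥ w) k = τ k * (((A + W) *ᵥ z) k - (A *ᵥ (z ⊓ 0)) k) := fun k hk =>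
    add_mulVec_mul_apply hW hτneg fun l hl => hτ k l hk hl
  have hMw : M *ᵥ w = (A + W) *ᵥ w := by
    rw [hMdef, sub_mulVec, smul_mulVec, vecMulVec_mulVec, hvτ]
    simp
  have hquad : m * (w ⬝ᵥ w) ≤ w ⬝ᵥ M *ᵥ w := by
    rw [hMw, dotProduct, dotProduct, Finset.mul_sum]
    refine Finset.sum_le_sum fun k _ => ?_
    rcases lt_or_ge (z k) 0 with hk | hk
    · simp [w, hτneg k hk]
    · rw [hBw k hk]
      have hgap : 0 ≤ τ k ^ 2 * z k * (((A + W) *ᵥ z) k - m * z k - (A *ᵥ (z ⊓ 0)) k) :=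
        mul_nonneg (mul_nonneg (sq_nonneg _) hk) (by linarith [hz k, hc k])
      simp only [w, Pi.mul_apply]
      linarith
  have heig := congrFun (hMw ▸ mulVec_eq_lam1_smul_of_le hM hquad) i
  have hzi : 0 ≤ z i := not_lt.mp fun h => hi (hτneg i h)
  rw [hBw i hzi] at heig
  simp only [w, Pi.smul_apply, Pi.mul_apply, smul_eq_mul] at heig
  have hci := mul_left_cancel₀ hi (heig.trans (mul_left_comm _ _ _))
  exact apply_eq_zero_of_mulVec_inf_zero_eq_zero hApos
    (le_antisymm (hc i) (by linarith [hz i])) hj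

lemma exists_weight_of_closed_subset (hA : A.IsHermitian) (hApos : ∀ i j, 0 ≤ A i j)
    (hvpos : ∀ i, 0 ≤ v i) {P : Set (Fin n)} (hPS : P ⊆ {i | 0 ≤ z i})
    (hPcl : ∀ i ∈ P, ∀ j ∈ {i | 0 ≤ z i}, 0 < A i j → j ∈ P) {p q : Fin n} (hp : p ∈ P)
    (hq : 0 ≤ z q) (hqP : q ∉ P) :
    ∃ τ : Fin n → ℝ, (∀ j, z j < 0 → τ j = 0) ∧
      (∀ i j, 0 ≤ z i → 0 ≤ z j → A i j ≠ 0 → τ j = τ i) ∧ v ⬝ᵥ (τ * z) = 0 ∧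
      ∃ k l, τ k ≠ 0 ∧ τ l ≠ τ k := by
  classical
  set S : Set (Fin n) := {i | 0 ≤ z i}
  have hind (T : Set (Fin n)) (hT : T ⊆ S) : 0 ≤ v ⬝ᵥ T.indicator z :=
    Finset.sum_nonneg fun i _ => mul_nonneg (hvpos i) (Set.indicator_nonneg (fun j hj => hT hj) i)
  obtain ⟨α, β, hα, hβ, hαβ, hbal⟩ :=
    exists_nonneg_add_pos_mul_eq_mul (hind P hPS) (hind (S \ P) Set.sdiff_subset)
  set τ : Fin n → ℝ := fun i => if i ∈ P then α else if i ∈ S then -β else 0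
  refine ⟨τ, fun j hj => ?_, fun i j hi hj hij => ?_, ?_, ?_⟩
  · have hjS : j ∉ S := not_le.mpr hj
    have hjP : j ∉ P := fun hjP => hjS (hPS hjP)
    simp [τ, hjP, hjS]
  · have hij := (hApos i j).lt_of_ne' hij
    have hji : 0 < A j i := by rwa [← hA.apply i j] at hij
    by_cases hiP : i ∈ P
    · simp [τ, hiP, hPcl i hiP j hj hij]
    · have hjP : j ∉ P := fun hjP => hiP (hPcl j hjP i hi hji)
      simp [τ, hiP, hjP, S, hi, hj]
  · have hτz : τ * z = α • P.indicator z - β • (S \ P).indicator z := by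
      ext i
      by_cases hiP : i ∈ P
      · simp [τ, hiP]
      · by_cases hiS : i ∈ S <;> simp [τ, hiP, hiS]
    rw [hτz, dotProduct_sub, dotProduct_smul, dotProduct_smul, smul_eq_mul, smul_eq_mul, hbal,
      sub_self]
  · have hτp : τ p = α := if_pos hp
    have hτq : τ q = -β := by simp [τ, hqP, S, hq]
    rcases hα.eq_or_lt with rfl | hα
    · refine ⟨q, p, ?_, ?_⟩ <;> simp only [hτp, hτq] <;> intro h <;> linarith
    · refine ⟨p, q, ?_, ?_⟩ <;> simp only [hτp, hτq] <;> intro h <;> linarith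

theorem inducedSubgraph_preconnected_of_lam1_le_mulVec (hA : A.IsHermitian)
    (hApos : ∀ i j, 0 ≤ A i j) (hAirr : A.Irreducible) (hW : W.IsDiag) (hvpos : ∀ i, 0 ≤ v i)
    (hMdef : M = A + W - σ • vecMulVec v v) (hM : M.IsHermitian)
    (hz : ∀ i, lam1 M hM * z i ≤ ((A + W) *ᵥ z) i) :
    (inducedSubgraph A {i | 0 ≤ z i}).Preconnected := by
  refine inducedSubgraph_preconnected_of_forall_closed fun P hPS ⟨p, hp⟩ hPcl q hq => ?_
  by_contra hqP
  obtain ⟨τ, hτneg, hτ, hvτ, k, l, hk, hl⟩ :=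
    exists_weight_of_closed_subset hA hApos hvpos hPS hPcl hp hq hqP
  have hcut (i j : Fin n) (hi : τ i ≠ 0) (hj : τ j ≠ τ i) : A i j = 0 := by
    rcases lt_or_ge (z j) 0 with hzj | hzj
    · exact apply_eq_zero_of_lam1_le_mulVec hApos hW hMdef hM hz hτneg hτ hvτ hi hzj
    · have hzi : 0 ≤ z i := not_lt.mp fun h => hi (hτneg i h)
      by_contra hij
      exact hj (hτ i j hzi hzj hij)
  have huniv := hAirr.eq_univ_of_forall_apply_eq_zero (T := {j | τ j = τ k}) ⟨k, rfl⟩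
    fun i hi j hj => hcut i j (hi ▸ hk) (hi ▸ hj)
  exact hl (Set.eq_univ_iff_forall.mp huniv l)
end

theorem stmt5_general {n : ℕ} (A W M : Matrix (Fin n) (Fin n) ℝ)
    (hA : A.IsHermitian) (hApos : ∀ i j, 0 ≤ A i j) (hAirr : A.Irreducible)
    (hW : W.IsDiag) (v : Fin n → ℝ) (hv : v ≠ 0) (hvpos : ∀ i, 0 ≤ v i)
    (σ : ℝ) (hσ : 0 < σ)
    (hMdef : M = A + W - σ • vecMulVec v v) (hM : M.IsHermitian)
    (hAW : (A + W).IsHermitian)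
    (x : Fin n → ℝ) (hx : x ≠ 0) (hxeig : M *ᵥ x = lam1 M hM • x)
    (hvx : 0 ≤ v ⬝ᵥ x)
    (y : Fin n → ℝ) (hy : ∀ i, 0 < y i)
    (hyeig : (A + W) *ᵥ y = lam1 (A + W) hAW • y) :
    ∀ ε : ℝ, 0 ≤ ε →
      ({i | 0 ≤ x i + ε * y i} : Set (Fin n)).Nonempty ∧
      (inducedSubgraph A {i | 0 ≤ x i + ε * y i}).Connected := by
  intro ε hε
  set m := lam1 M hM
  set r := lam1 (A + W) hAW
  have hBx : (A + W) *ᵥ x = m • x + (σ * (v ⬝ᵥ x)) • v := by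
    rw [← hxeig, hMdef, sub_mulVec, smul_mulVec, vecMulVec_mulVec, op_smul_eq_smul, smul_smul,
      sub_add_cancel]
  have hmr : m ≤ r := le_lam1_of_le_dotProduct_mulVec hAW hx (by
    rw [hBx, dotProduct_add, dotProduct_smul, dotProduct_smul, smul_eq_mul, smul_eq_mul,
      dotProduct_comm x v]
    nlinarith [mul_nonneg hσ.le (mul_self_nonneg (v ⬝ᵥ x))])
  have hz (i : Fin n) : m * (x i + ε * y i) ≤ ((A + W) *ᵥ (x + ε • y)) i := by
    rw [mulVec_add, mulVec_smul, hBx, hyeig]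
    simp only [Pi.add_apply, Pi.smul_apply, smul_eq_mul]
    nlinarith [mul_nonneg (mul_nonneg hσ.le hvx) (hvpos i),
      mul_nonneg (mul_nonneg hε (sub_nonneg.mpr hmr)) (hy i).le]
  obtain ⟨i, hi⟩ := exists_nonneg_of_dotProduct_nonneg hvpos hv hvx
  have hne : ({i | 0 ≤ x i + ε * y i} : Set (Fin n)).Nonempty :=
    ⟨i, add_nonneg hi (mul_nonneg hε (hy i).le)⟩
  have := hne.to_subtype
  exact ⟨hne, ⟨inducedSubgraph_preconnected_of_lam1_le_mulVec (z := x + ε • y)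
    hA hApos hAirr hW hvpos hMdef hM hz⟩⟩

theorem stmt5 {n : ℕ} (hn : 0 < n) (A W M : Matrix (Fin n) (Fin n) ℝ)
    (hA : A.IsHermitian) (hApos : ∀ i j, 0 ≤ A i j) (hAirr : A.Irreducible)
    (hW : W.IsDiag) (v : Fin n → ℝ) (hv : v ≠ 0) (hvpos : ∀ i, 0 ≤ v i)
    (σ : ℝ) (hσ : 0 < σ)
    (hMdef : M = A + W - σ • vecMulVec v v) (hM : M.IsHermitian)
    (hAW : (A + W).IsHermitian)
    (x : Fin n → ℝ) (hx : x ≠ 0) (hxeig : M *ᵥ x = lam1 M hM • x)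
    (hvx : 0 ≤ v ⬝ᵥ x)
    (y : Fin n → ℝ) (hy : ∀ i, 0 < y i)
    (hyeig : (A + W) *ᵥ y = lam1 (A + W) hAW • y) :
    ∀ ε : ℝ, 0 ≤ ε →
      ({i | 0 ≤ x i + ε * y i} : Set (Fin n)).Nonempty ∧
      (inducedSubgraph A {i | 0 ≤ x i + ε * y i}).Connected :=
  stmt5_general A W M hA hApos hAirr hW v hv hvpos σ hσ hMdef hM hAW x hx hxeig hvx y hy hyeig
end

section
/- Let M be an n×n generalized modularity matrix satisfying M·𝟙 = 0, where 𝟙 is the all-ones vector, and let {S₁,…,S_p} be a partition of {1,…,n} into pairwise disjoint nonempty subsets such that Q(S_i) > 0 for all i and Q(S_i, S_j) < 0 for all i ≠ j. Then M has at least p−1 positive eigenvalues (counted with multiplicity). -/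
open Matrix BigOperators

/-- The characteristic vector `𝟙_S` of a set of indices. -/
noncomputable def charVec {n : ℕ} (S : Finset (Fin n)) : Fin n → ℝ :=
  fun i => if i ∈ S then 1 else 0

/-- The (joint) modularity `Q(S,T) = 𝟙_Sᵀ M 𝟙_T`; the modularity of `S` is `Q(S,S)`. -/
noncomputable def modQ {n : ℕ} (M : Matrix (Fin n) (Fin n) ℝ)
    (S T : Finset (Fin n)) : ℝ :=
  charVec S ⬝ᵥ (M *ᵥ charVec T)

/-- The number of positive eigenvalues (with multiplicity) of a real symmetric matrix. -/
noncomputable def posEigCount {n : ℕ} (X : Matrix (Fin n) (Fin n) ℝ)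
    (hX : X.IsHermitian) : ℕ :=
  (Finset.univ.filter (fun i => 0 < hX.eigenvalues i)).card

/-- The number of nonnegative eigenvalues (with multiplicity) of a real symmetric matrix. -/
noncomputable def nonnegEigCount {n : ℕ} (X : Matrix (Fin n) (Fin n) ℝ)
    (hX : X.IsHermitian) : ℕ :=
  (Finset.univ.filter (fun i => 0 ≤ hX.eigenvalues i)).card

/-!
Let `P` be the matrix whose columns are the characteristic vectors of the parts, so that
`B = Pᵀ M P` has entries `B i j = Q(S_i, S_j)`. Since `P 𝟙 = 𝟙` and `M 𝟙 = 0`, the symmetric matrix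
`B` has zero row sums, hence `cᵀ B c = ½ ∑ᵢⱼ (-B i j) (c i - c j)²`, which is positive for every
non-constant `c` because the off-diagonal entries of `B` are negative. So `M` is positive definite
on the image under `P` of the `(p - 1)`-dimensional space `{c | ∑ c i = 0}`. Such a subspace meets
the span of the eigenvectors of `M` with nonpositive eigenvalues trivially, so its dimension is at
most the number of positive eigenvalues.
-/

open Function Module Finset

theorem Module.finrank_le_finrank_ker_add_one {K V : Type*} [Field K] [AddCommGroup V]
    [Module K V] [FiniteDimensional K V] (f : Dual K V) :
    finrank K V ≤ finrank K (LinearMap.ker f) + 1 := by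
  rcases eq_or_ne f 0 with rfl | hf
  · rw [LinearMap.ker_zero, finrank_top]
    exact Nat.le_succ _
  · exact (f.finrank_ker_add_one_of_ne_zero hf).ge

theorem Function.exists_apply_ne_of_sum_eq_zero {κ K : Type*} [Fintype κ] [Field K] [CharZero K]
    {c : κ → K} (hsum : ∑ i, c i = 0) (hc : c ≠ 0) : ∃ i j, c i ≠ c j := by
  by_contra! hconst
  obtain ⟨i, hi⟩ := ne_iff.mp hc
  have : Nonempty κ := ⟨i⟩
  have hsum_const : ∑ j, c j = Fintype.card κ • c i := by
    simp [sum_congr rfl fun j _ => hconst j i]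
  rw [hsum, eq_comm, smul_eq_zero] at hsum_const
  exact hsum_const.elim Fintype.card_ne_zero hi

namespace Matrix

variable {ι κ : Type*} [Fintype ι] [Fintype κ]

theorem dotProduct_mulVec_eq_sum_mul_sub_sq {B : Matrix κ κ ℝ} (hrow : ∀ i, ∑ j, B i j = 0)
    (hcol : ∀ j, ∑ i, B i j = 0) (c : κ → ℝ) :
    c ⬝ᵥ B *ᵥ c = ∑ i, ∑ j, -B i j * (c i - c j) ^ 2 / 2 := by
  have hexpand : ∀ i j, -B i j * (c i - c j) ^ 2 / 2
      = c i * (B i j * c j) - c i ^ 2 / 2 * B i j - c j ^ 2 / 2 * B i j := fun i j => by ring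
  have hrow' : ∑ i, ∑ j, c i ^ 2 / 2 * B i j = 0 := by simp [← mul_sum, hrow]
  have hcol' : ∑ i, ∑ j, c j ^ 2 / 2 * B i j = 0 := by rw [sum_comm]; simp [← mul_sum, hcol]
  simp only [hexpand, sum_sub_distrib, hrow', hcol', sub_zero, dotProduct, mulVec, mul_sum]

theorem dotProduct_mulVec_pos_of_apply_ne {B : Matrix κ κ ℝ} (hB : B.IsSymm) (hB1 : B *ᵥ 1 = 0)
    (hneg : Pairwise fun i j => B i j < 0) {c : κ → ℝ} {i j : κ} (hc : c i ≠ c j) :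
    0 < c ⬝ᵥ B *ᵥ c := by
  have hrow : ∀ i, ∑ j, B i j = 0 := fun i => by simpa [mulVec, dotProduct] using congrFun hB1 i
  have hcol : ∀ j, ∑ i, B i j = 0 := fun j => by simpa only [← hB.apply j] using hrow j
  have hterm : ∀ k l, 0 ≤ -B k l * (c k - c l) ^ 2 / 2 := fun k l => by
    rcases eq_or_ne k l with rfl | hkl
    · simp
    · have : 0 ≤ -B k l := by linarith [hneg hkl]
      positivity
  have hij : 0 < -B i j * (c i - c j) ^ 2 / 2 := by
    have : 0 < -B i j := neg_pos.mpr (hneg (ne_of_apply_ne c hc))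
    have : 0 < (c i - c j) ^ 2 := sq_pos_of_ne_zero (sub_ne_zero.mpr hc)
    positivity
  rw [dotProduct_mulVec_eq_sum_mul_sub_sq hrow hcol]
  exact sum_pos' (fun k _ => sum_nonneg fun l _ => hterm k l)
    ⟨i, mem_univ _, sum_pos' (fun l _ => hterm i l) ⟨j, mem_univ _, hij⟩⟩

open RealInnerProductSpace in
theorem IsHermitian.dotProduct_mulVec_nonpos_of_mem_span [DecidableEq ι] {M : Matrix ι ι ℝ}
    (hM : M.IsHermitian) {x : EuclideanSpace ℝ ι}
    (hx : x ∈ Submodule.span ℝ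
      (Set.range fun i : {i // hM.eigenvalues i ≤ 0} => hM.eigenvectorBasis i)) :
    x.ofLp ⬝ᵥ M *ᵥ x.ofLp ≤ 0 := by
  set b := hM.eigenvectorBasis
  set ev := hM.eigenvalues
  obtain ⟨a, rfl⟩ := (Submodule.mem_span_range_iff_exists_fun ℝ).mp hx
  have hb : Orthonormal ℝ fun i : {i // ev i ≤ 0} => b i :=
    b.orthonormal.comp _ Subtype.val_injective
  have hMx : M *ᵥ (∑ i, a i • b i).ofLp = (∑ i, (a i * ev i) • b i).ofLp := by
    simp [WithLp.ofLp_sum, mulVec_sum, mulVec_smul, hM.mulVec_eigenvectorBasis, smul_smul, b, ev]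
  calc (∑ i, a i • b i).ofLp ⬝ᵥ M *ᵥ (∑ i, a i • b i).ofLp
      = ⟪∑ i, a i • b i, ∑ i, (a i * ev i) • b i⟫ := by
        rw [hMx, EuclideanSpace.inner_eq_star_dotProduct, dotProduct_comm, star_trivial]
    _ = ∑ i, a i * (a i * ev i) := by simpa using hb.inner_sum a (fun i => a i * ev i) univ
    _ ≤ 0 := sum_nonpos fun i _ => by nlinarith [i.2, mul_self_nonneg (a i)]

theorem IsHermitian.finrank_le_card_pos_eigenvalues [DecidableEq ι] {M : Matrix ι ι ℝ}
    (hM : M.IsHermitian) (V : Submodule ℝ (EuclideanSpace ℝ ι))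
    (hV : ∀ x ∈ V, x ≠ 0 → 0 < x.ofLp ⬝ᵥ M *ᵥ x.ofLp) :
    finrank ℝ V ≤ #{i | 0 < hM.eigenvalues i} := by
  set N := Submodule.span ℝ
    (Set.range fun i : {i // hM.eigenvalues i ≤ 0} => hM.eigenvectorBasis i)
  have hdisj : Disjoint V N := by
    refine Submodule.disjoint_def.mpr fun x hxV hxN => ?_
    by_contra hx
    exact (hV x hxV hx).not_ge (hM.dotProduct_mulVec_nonpos_of_mem_span hxN)
  have hN : finrank ℝ N = #{i | hM.eigenvalues i ≤ 0} :=
    (finrank_span_eq_card (hM.eigenvectorBasis.orthonormal.linearIndependent.comp _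
      Subtype.val_injective)).trans (Fintype.card_subtype _)
  have hdim := Submodule.finrank_add_finrank_le_of_disjoint hdisj
  rw [finrank_euclideanSpace, hN] at hdim
  have hcard := card_filter_add_card_filter_not (s := univ) (fun i => 0 < hM.eigenvalues i)
  simp only [not_lt, card_univ] at hcard
  omega

theorem IsHermitian.finrank_le_card_pos_eigenvalues_of_transpose_mul_mul [DecidableEq ι]
    {M : Matrix ι ι ℝ} (hM : M.IsHermitian) (P : Matrix ι κ ℝ) (U : Submodule ℝ (κ → ℝ))
    (hU : ∀ c ∈ U, c ≠ 0 → 0 < c ⬝ᵥ (Pᵀ * M * P) *ᵥ c) :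
    finrank ℝ U ≤ #{i | 0 < hM.eigenvalues i} := by
  have hform : ∀ c, c ⬝ᵥ (Pᵀ * M * P) *ᵥ c = (P *ᵥ c) ⬝ᵥ M *ᵥ (P *ᵥ c) := fun c => by
    rw [← mulVec_mulVec, ← mulVec_mulVec, dotProduct_mulVec, vecMul_transpose]
  let L := (WithLp.linearEquiv 2 ℝ (ι → ℝ)).symm.toLinearMap ∘ₗ P.mulVecLin ∘ₗ U.subtype
  have hL : Injective L := by
    refine (injective_iff_map_eq_zero L).mpr fun c hc => ?_
    by_contra hc0
    have hPc : P *ᵥ c = 0 := congrArg WithLp.ofLp hc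
    exact (hU c c.2 (by simpa using hc0)).ne' (by rw [hform, hPc, mulVec_zero, dotProduct_zero])
  rw [← LinearMap.finrank_range_of_inj hL]
  refine hM.finrank_le_card_pos_eigenvalues _ ?_
  rintro _ ⟨c, rfl⟩ hc0
  have hc : (c : κ → ℝ) ≠ 0 := fun h => hc0 (by simp [L, h])
  simpa [hform, L] using hU c c.2 hc

end Matrix

noncomputable def charMatrix {κ : Type*} {n : ℕ} (S : κ → Finset (Fin n)) :
    Matrix (Fin n) κ ℝ :=
  of fun x j => charVec (S j) x

theorem transpose_mul_mul_charMatrix_apply {κ : Type*} {n : ℕ} (M : Matrix (Fin n) (Fin n) ℝ)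
    (S : κ → Finset (Fin n)) (i j : κ) :
    ((charMatrix S)ᵀ * M * charMatrix S) i j = modQ M (S i) (S j) := by
  simp only [charMatrix, modQ, mul_apply, transpose_apply, of_apply, dotProduct, mulVec,
    sum_mul, mul_sum, mul_assoc]
  exact sum_comm

theorem charMatrix_mulVec_one {κ : Type*} [Fintype κ] {n : ℕ} {S : κ → Finset (Fin n)}
    (hdisj : Pairwise (Disjoint on S)) (hcover : ∀ x, ∃ i, x ∈ S i) :
    charMatrix S *ᵥ 1 = 1 := by
  funext x
  obtain ⟨i, hi⟩ := hcover x
  have hother : ∀ j ≠ i, x ∉ S j := fun j hj hx => disjoint_left.mp (hdisj hj) hx hi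
  simp only [charMatrix, mulVec, dotProduct, of_apply, Pi.one_apply, mul_one]
  rw [sum_eq_single i (fun j _ hj => by simp [charVec, hother j hj]) (by simp)]
  simp [charVec, hi]

theorem stmt11_general {n p : ℕ} (M : Matrix (Fin n) (Fin n) ℝ)
    (hM : M.IsHermitian)
    (hMone : M *ᵥ (fun _ => (1 : ℝ)) = 0)
    (S : Fin p → Finset (Fin n))
    (hSdisj : ∀ i j, i ≠ j → Disjoint (S i) (S j))
    (hScover : ∀ x : Fin n, ∃ i, x ∈ S i)
    (hQneg : ∀ i j, i ≠ j → modQ M (S i) (S j) < 0) :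
    p - 1 ≤ posEigCount M hM := by
  set P := charMatrix S
  have hB : (Pᵀ * M * P).IsSymm := by
    simpa [conjTranspose_eq_transpose_of_trivial] using isHermitian_conjTranspose_mul_mul P hM
  have hB1 : (Pᵀ * M * P) *ᵥ 1 = 0 := by
    have hMone' : M *ᵥ 1 = 0 := hMone
    rw [← mulVec_mulVec, charMatrix_mulVec_one (fun i j => hSdisj i j) hScover, ← mulVec_mulVec,
      hMone', mulVec_zero]
  have hBneg : Pairwise fun i j => (Pᵀ * M * P) i j < 0 := fun i j hij => by
    simpa only [P, transpose_mul_mul_charMatrix_apply] using hQneg i j hij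
  set sumCoeffs : Dual ℝ (Fin p → ℝ) := Fintype.linearCombination ℝ fun _ => 1
  have hU : p ≤ finrank ℝ (LinearMap.ker sumCoeffs) + 1 := by
    simpa using finrank_le_finrank_ker_add_one sumCoeffs
  have hpos : finrank ℝ (LinearMap.ker sumCoeffs) ≤ posEigCount M hM :=
    hM.finrank_le_card_pos_eigenvalues_of_transpose_mul_mul P _ fun c hc hc0 => by
      have hsum : ∑ i, c i = 0 := by simpa [sumCoeffs, Fintype.linearCombination_apply] using hc
      obtain ⟨i, j, hij⟩ := exists_apply_ne_of_sum_eq_zero hsum hc0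
      exact dotProduct_mulVec_pos_of_apply_ne hB hB1 hBneg hij
  omega

theorem stmt11 {n p : ℕ} (hp : 1 ≤ p) (A W M : Matrix (Fin n) (Fin n) ℝ)
    (hA : A.IsHermitian) (hApos : ∀ i j, 0 ≤ A i j) (hAirr : A.Irreducible)
    (hW : W.IsDiag) (v : Fin n → ℝ) (hv : v ≠ 0) (hvpos : ∀ i, 0 ≤ v i)
    (σ : ℝ) (hσ : 0 < σ)
    (hMdef : M = A + W - σ • vecMulVec v v) (hM : M.IsHermitian)
    (hMone : M *ᵥ (fun _ => (1 : ℝ)) = 0)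
    (S : Fin p → Finset (Fin n)) (hSne : ∀ i, (S i).Nonempty)
    (hSdisj : ∀ i j, i ≠ j → Disjoint (S i) (S j))
    (hScover : ∀ x : Fin n, ∃ i, x ∈ S i)
    (hQpos : ∀ i, 0 < modQ M (S i) (S i))
    (hQneg : ∀ i j, i ≠ j → modQ M (S i) (S j) < 0) :
    p - 1 ≤ posEigCount M hM :=
  stmt11_general M hM hMone S hSdisj hScover hQneg
end

section
/- Let A be an n×n symmetric, entrywise nonnegative, irreducible matrix with Q_NG the Newman–Girvan modularity function of A, let S ⊆ {1,…,n}, let i ∈ S and j ∉ S, let ε > 0, and let A' = A + ε·(e_i e_jᵀ + e_j e_iᵀ) with Newman–Girvan modularity function Q'_NG. Then Q'_NG(S) − Q_NG(S) = −(2ε·vol S·(vol G − vol S) + ε²·vol G)/(vol G·(vol G + 2ε)); in particular Q'_NG(S) < Q_NG(S). -/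
open Matrix BigOperators

/-- The degree vector `d = A·𝟙`. -/
noncomputable def degVec {n : ℕ} (A : Matrix (Fin n) (Fin n) ℝ) : Fin n → ℝ :=
  A *ᵥ (fun _ => 1)

/-- The volume of the graph, `vol G = 𝟙ᵀ d`. -/
noncomputable def volG {n : ℕ} (A : Matrix (Fin n) (Fin n) ℝ) : ℝ :=
  ∑ i, degVec A i

/-- The volume of a vertex subset, `vol S = ∑_{i ∈ S} d_i`. -/
noncomputable def volS {n : ℕ} (A : Matrix (Fin n) (Fin n) ℝ) (S : Finset (Fin n)) : ℝ :=
  ∑ i ∈ S, degVec A i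

/-- The Newman–Girvan modularity matrix `M_NG = A - (1 / vol G) · d dᵀ`. -/
noncomputable def ngMatrix {n : ℕ} (A : Matrix (Fin n) (Fin n) ℝ) :
    Matrix (Fin n) (Fin n) ℝ :=
  A - (volG A)⁻¹ • vecMulVec (degVec A) (degVec A)

/-- The Newman–Girvan modularity function `Q_NG(S) = 𝟙_Sᵀ M_NG 𝟙_S`. -/
noncomputable def ngQ {n : ℕ} (A : Matrix (Fin n) (Fin n) ℝ) (S : Finset (Fin n)) : ℝ :=
  charVec S ⬝ᵥ (ngMatrix A *ᵥ charVec S)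


/-! Adding the edge `{i, j}` with weight `ε` raises `vol G` by `2ε` and, since exactly one endpoint
lies in `S`, raises `vol S` by `ε` while leaving the internal weight `∑_{a,b ∈ S} A a b` unchanged.
The modularity `∑_{a,b ∈ S} A a b - (vol S)² / vol G` therefore changes only through its
null-model term, and the difference is a rational function of `vol G`, `vol S` and `ε` whose
numerator is positive because `0 ≤ vol S ≤ vol G` and `vol G > 0`. -/

section

variable {n : ℕ}

lemma charVec_dotProduct_mulVec_charVec (M : Matrix (Fin n) (Fin n) ℝ) (S : Finset (Fin n)) :
    charVec S ⬝ᵥ (M *ᵥ charVec S) = ∑ a ∈ S, ∑ b ∈ S, M a b := by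
  simp [dotProduct, mulVec, charVec, mul_ite, ite_mul, Finset.sum_ite_mem]

lemma ngQ_eq_sum_sub (A : Matrix (Fin n) (Fin n) ℝ) (S : Finset (Fin n)) :
    ngQ A S = ∑ a ∈ S, ∑ b ∈ S, A a b - (volG A)⁻¹ * volS A S ^ 2 := by
  rw [ngQ, ngMatrix, sub_mulVec, dotProduct_sub, smul_mulVec, dotProduct_smul,
    charVec_dotProduct_mulVec_charVec, charVec_dotProduct_mulVec_charVec, smul_eq_mul, volS, sq,
    Finset.sum_mul_sum]
  simp [vecMulVec_apply]

lemma degVec_add (A B : Matrix (Fin n) (Fin n) ℝ) : degVec (A + B) = degVec A + degVec B :=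
  add_mulVec A B _

lemma degVec_single (i j : Fin n) (c : ℝ) : degVec (single i j c) = Pi.single i c := by
  ext l
  simp [degVec, mulVec, dotProduct, single, Pi.single_apply, eq_comm, ite_and]

lemma volS_add (A B : Matrix (Fin n) (Fin n) ℝ) (S : Finset (Fin n)) :
    volS (A + B) S = volS A S + volS B S := by
  simp only [volS, degVec_add, Pi.add_apply, Finset.sum_add_distrib]

lemma volS_single (i j : Fin n) (c : ℝ) (S : Finset (Fin n)) :
    volS (single i j c) S = if i ∈ S then c else 0 := by
  simp [volS, degVec_single, Pi.single_apply]

lemma volG_eq_volS_univ (A : Matrix (Fin n) (Fin n) ℝ) : volG A = volS A Finset.univ := rfl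

lemma sum_sum_single_eq_zero_of_col_notMem {S : Finset (Fin n)} {j : Fin n} (hj : j ∉ S)
    (i : Fin n) (c : ℝ) : ∑ a ∈ S, ∑ b ∈ S, single i j c a b = 0 :=
  Finset.sum_eq_zero fun _ _ => Finset.sum_eq_zero fun _ hb =>
    single_apply_of_col_ne _ _ (ne_of_mem_of_not_mem hb hj).symm _

lemma sum_sum_single_eq_zero_of_row_notMem {S : Finset (Fin n)} {i : Fin n} (hi : i ∉ S)
    (j : Fin n) (c : ℝ) : ∑ a ∈ S, ∑ b ∈ S, single i j c a b = 0 :=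
  Finset.sum_eq_zero fun _ ha => Finset.sum_eq_zero fun _ _ =>
    single_apply_of_row_ne (ne_of_mem_of_not_mem ha hi).symm _ _ _

lemma degVec_nonneg {A : Matrix (Fin n) (Fin n) ℝ} (hA : ∀ i j, 0 ≤ A i j) (l : Fin n) :
    0 ≤ degVec A l := by
  simp only [degVec, mulVec, dotProduct, mul_one]
  exact Finset.sum_nonneg fun m _ => hA l m

/-- A zero row of `A` is a zero row of every positive power of `A`, so irreducibility forbids it. -/
lemma degVec_pos_of_irreducible {A : Matrix (Fin n) (Fin n) ℝ} (hA : ∀ i j, 0 ≤ A i j)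
    (hirr : A.Irreducible) (i : Fin n) : 0 < degVec A i := by
  refine (degVec_nonneg hA i).lt_of_ne fun h => ?_
  have hrow : ∀ m, A i m = 0 := fun m =>
    (Finset.sum_eq_zero_iff_of_nonneg fun m _ => hA i m).mp
      (by simpa [degVec, mulVec, dotProduct] using h.symm) m (Finset.mem_univ m)
  obtain ⟨k, hk, hpos⟩ := hirr i i
  obtain ⟨m, rfl⟩ := Nat.exists_eq_add_one_of_ne_zero hk.ne'
  simp [pow_succ', mul_apply, hrow] at hpos

lemma volS_nonneg {A : Matrix (Fin n) (Fin n) ℝ} (hA : ∀ i j, 0 ≤ A i j) (S : Finset (Fin n)) :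
    0 ≤ volS A S :=
  Finset.sum_nonneg fun l _ => degVec_nonneg hA l

lemma volS_le_volG {A : Matrix (Fin n) (Fin n) ℝ} (hA : ∀ i j, 0 ≤ A i j) (S : Finset (Fin n)) :
    volS A S ≤ volG A :=
  Finset.sum_le_sum_of_subset_of_nonneg (Finset.subset_univ S) fun l _ _ => degVec_nonneg hA l

lemma volG_pos_of_irreducible {A : Matrix (Fin n) (Fin n) ℝ} (hA : ∀ i j, 0 ≤ A i j)
    (hirr : A.Irreducible) (i : Fin n) : 0 < volG A :=
  Finset.sum_pos' (fun l _ => degVec_nonneg hA l)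
    ⟨i, Finset.mem_univ i, degVec_pos_of_irreducible hA hirr i⟩

end

lemma modularity_drop_pos {V s ε : ℝ} (hV : 0 < V) (hs : 0 ≤ s) (hsV : s ≤ V) (hε : 0 < ε) :
    0 < (2 * ε * s * (V - s) + ε ^ 2 * V) / (V * (V + 2 * ε)) := by
  have : 0 ≤ 2 * ε * s * (V - s) := by
    have := sub_nonneg.2 hsV
    positivity
  positivity

theorem stmt16_general {n : ℕ} (A : Matrix (Fin n) (Fin n) ℝ)
    (hApos : ∀ i j, 0 ≤ A i j) (hAirr : A.Irreducible)
    (S : Finset (Fin n)) (i j : Fin n) (hiS : i ∈ S) (hjS : j ∉ S)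
    (ε : ℝ) (hε : 0 < ε)
    (A' : Matrix (Fin n) (Fin n) ℝ)
    (hA' : A' = A + Matrix.single i j ε + Matrix.single j i ε) :
    ngQ A' S - ngQ A S =
      -((2 * ε * volS A S * (volG A - volS A S) + ε ^ 2 * volG A) /
        (volG A * (volG A + 2 * ε))) ∧
    ngQ A' S < ngQ A S := by
  have hvolG' : volG A' = volG A + 2 * ε := by
    simp only [volG_eq_volS_univ, hA', volS_add, volS_single, Finset.mem_univ, if_true]
    ring
  have hvolS' : volS A' S = volS A S + ε := by
    simp [hA', volS_add, volS_single, hiS, hjS]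
  have hinner : ∑ a ∈ S, ∑ b ∈ S, A' a b = ∑ a ∈ S, ∑ b ∈ S, A a b := by
    simp only [hA', Matrix.add_apply, Finset.sum_add_distrib,
      sum_sum_single_eq_zero_of_col_notMem hjS, sum_sum_single_eq_zero_of_row_notMem hjS, add_zero]
  have hvolG := volG_pos_of_irreducible hApos hAirr i
  have hdiff : ngQ A' S - ngQ A S =
      -((2 * ε * volS A S * (volG A - volS A S) + ε ^ 2 * volG A) /
        (volG A * (volG A + 2 * ε))) := by
    rw [ngQ_eq_sum_sub, ngQ_eq_sum_sub, hinner, hvolG', hvolS']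
    field_simp
    ring
  refine ⟨hdiff, ?_⟩
  have := modularity_drop_pos hvolG (volS_nonneg hApos S) (volS_le_volG hApos S) hε
  linarith

theorem stmt16 {n : ℕ} (A : Matrix (Fin n) (Fin n) ℝ)
    (hA : A.IsHermitian) (hApos : ∀ i j, 0 ≤ A i j) (hAirr : A.Irreducible)
    (S : Finset (Fin n)) (i j : Fin n) (hiS : i ∈ S) (hjS : j ∉ S)
    (ε : ℝ) (hε : 0 < ε)
    (A' : Matrix (Fin n) (Fin n) ℝ)
    (hA' : A' = A + Matrix.single i j ε + Matrix.single j i ε) :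
    ngQ A' S - ngQ A S =
      -((2 * ε * volS A S * (volG A - volS A S) + ε ^ 2 * volG A) /
        (volG A * (volG A + 2 * ε))) ∧
    ngQ A' S < ngQ A S :=
  stmt16_general A hApos hAirr S i j hiS hjS ε hε A' hA'
end
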